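/- arXiv:1304.1637 — 8 statements merged into one kernel-verified Lean document; each statement's English description precedes it below -/
import Mathlib

section
/- Let s ≥ 1 be an integer, let a, b, c ∈ ℚ, let M = c·[[a, b], [0, 1]], and for i = 1, …, s+1 let N_i = [[A_i, B_i], [0, C_i]] with A_i, B_i, C_i ∈ ℚ. Then there exist rational numbers q₁, …, q_{s+1}, p₁, …, p_s such that for all positive integers m₁, …, m_s: N₁ M^{m₁} N₂ M^{m₂} ⋯ N_s M^{m_s} N_{s+1} = c^{m₁+⋯+m_s} · [[A₁⋯A_{s+1}·a^{m₁+⋯+m_s}, V], [0, C₁⋯C_{s+1}]], where V = val_a(q̄₁ p̄₁^{m_s−1} q̄₂ p̄₂^{m_{s-1}−1} ⋯ q̄_s p̄_s^{m₁−1} q̄_{s+1}), the value in base a of the digit word consisting of q₁, then p₁ repeated m_s−1 times, then q₂, then p₂ repeated m_{s-1}−1 times, …, then q_s, then p_s repeated m₁−1 times, then q_{s+1}. -/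
/-- The value `val_r(w)` of a digit word `w = w_{n-1} ⋯ w_1 w_0` (most significant digit
first) with respect to the base `r`: `val_r(w) = ∑_{i=0}^{n-1} w_i r^i`. -/
def valBase (r : ℚ) (w : List ℚ) : ℚ :=
  w.foldl (fun acc d => acc * r + d) 0

lemma valBase_foldl (a x : ℚ) (w : List ℚ) :
    w.foldl (fun acc d => acc * a + d) x = x * a ^ w.length + valBase a w := by
  induction w generalizing x with
  | nil => simp [valBase]
  | cons d w ih =>
    have h0 : valBase a (d :: w) = w.foldl (fun acc d => acc * a + d) d := by
      simp [valBase]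
    rw [List.foldl_cons, ih, h0, ih d, List.length_cons]
    ring

lemma valBase_cons (a d : ℚ) (w : List ℚ) :
    valBase a (d :: w) = d * a ^ w.length + valBase a w := by
  have : valBase a (d :: w) = w.foldl (fun acc d => acc * a + d) d := by simp [valBase]
  rw [this, valBase_foldl]

lemma valBase_append (a : ℚ) (u v : List ℚ) :
    valBase a (u ++ v) = valBase a u * a ^ v.length + valBase a v := by
  unfold valBase
  rw [List.foldl_append]
  exact valBase_foldl a _ v

lemma valBase_map_mul (a c : ℚ) (w : List ℚ) :
    valBase a (w.map (fun x => c * x)) = c * valBase a w := by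
  induction w with
  | nil => simp [valBase]
  | cons d w ih =>
    rw [List.map_cons, valBase_cons, valBase_cons, ih, List.length_map]
    ring

lemma valBase_replicate (a d : ℚ) (n : ℕ) :
    valBase a (List.replicate n d) = d * ∑ i ∈ Finset.range n, a ^ i := by
  induction n with
  | zero => simp [valBase]
  | succ n ih =>
    rw [List.replicate_succ, valBase_cons, ih, List.length_replicate,
      Finset.sum_range_succ]
    ring

lemma pow_smul_mat (a b c : ℚ) (m : ℕ) :
    (c • !![a, b; 0, 1]) ^ m
      = c ^ m • !![a ^ m, b * ∑ i ∈ Finset.range m, a ^ i; 0, 1] := by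
  induction m with
  | zero => rw [pow_zero, pow_zero]; norm_num; exact Matrix.one_fin_two
  | succ m ih =>
    rw [pow_succ, ih, smul_mul_assoc, mul_smul_comm, smul_smul, ← pow_succ,
      Matrix.mul_fin_two, Finset.sum_range_succ]
    congr 1
    ext i j
    fin_cases i <;> fin_cases j <;> simp <;> ring

lemma aux (s : ℕ) (a b c : ℚ) : ∀ (A B C : Fin (s + 1) → ℚ),
    ∃ q : Fin (s + 1) → ℚ, ∃ p : Fin s → ℚ,
      ∀ m : Fin s → ℕ, (∀ i, 1 ≤ m i) →
        (List.ofFn (fun i : Fin s =>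
            !![A i.castSucc, B i.castSucc; 0, C i.castSucc] *
              (c • !![a, b; 0, 1]) ^ m i)).prod *
          !![A (Fin.last s), B (Fin.last s); 0, C (Fin.last s)] =
        c ^ (∑ i, m i) •
          !![(∏ i, A i) * a ^ (∑ i, m i),
              valBase a
                ((List.ofFn (fun j : Fin s =>
                    q j.castSucc :: List.replicate (m j.rev - 1) (p j))).flatten ++
                  [q (Fin.last s)]);
              0, ∏ i, C i] := by
  induction s with
  | zero =>
    intro A B C
    refine ⟨fun _ => B 0, Fin.elim0, fun m _ => ?_⟩
    simp [valBase, Fin.last]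
  | succ s ih =>
    intro A B C
    obtain ⟨q', p', h'⟩ := ih (fun i => A i.succ) (fun i => B i.succ) (fun i => C i.succ)
    set Z : ℚ := ∏ i : Fin (s + 1), C i.succ with hZ
    set qq : Fin (s + 1 + 1) → ℚ :=
      Fin.snoc (fun i : Fin (s + 1) => A 0 * q' i) ((A 0 * b + B 0) * Z) with hqq
    set pp : Fin (s + 1) → ℚ :=
      Fin.snoc (fun j : Fin s => A 0 * p' j) (A 0 * b * Z) with hpp
    refine ⟨qq, pp, fun m hm => ?_⟩
    have h := h' (fun i => m i.succ) (fun i => hm i.succ)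
    rw [List.ofFn_succ, List.prod_cons, mul_assoc]
    have htail : (List.ofFn fun i : Fin s =>
        !![A (Fin.succ i).castSucc, B (Fin.succ i).castSucc; 0, C (Fin.succ i).castSucc] *
          (c • !![a, b; 0, 1]) ^ m (Fin.succ i)) = (List.ofFn fun i : Fin s =>
        !![A (i.castSucc).succ, B (i.castSucc).succ; 0, C (i.castSucc).succ] *
          (c • !![a, b; 0, 1]) ^ m (Fin.succ i)) := by
      congr 1
    rw [htail]
    have hlast : (Fin.last (s+1)) = (Fin.last s).succ := by
      rw [Fin.succ_last]
    rw [hlast, h]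
    set V' : ℚ := valBase a
        ((List.ofFn fun j : Fin s =>
          q' j.castSucc :: List.replicate (m j.rev.succ - 1) (p' j)).flatten ++
            [q' (Fin.last s)]) with hV'
    have hword : ((List.ofFn fun j : Fin (s+1) =>
          qq j.castSucc :: List.replicate (m j.rev - 1) (pp j)).flatten ++
        [qq (Fin.last s).succ])
        = (List.map (fun x => A 0 * x)
            ((List.ofFn fun j : Fin s =>
              q' j.castSucc :: List.replicate (m j.rev.succ - 1) (p' j)).flatten ++
                [q' (Fin.last s)])) ++
          (List.replicate (m 0 - 1) (A 0 * b * Z) ++ [(A 0 * b + B 0) * Z]) := by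
      rw [List.ofFn_succ']
      simp only [Fin.succ_last, Fin.snoc_last, Fin.snoc_castSucc, Fin.rev_last,
        Fin.rev_castSucc, List.concat_eq_append, List.flatten_append, List.flatten_cons,
        List.flatten_nil, List.append_nil, List.map_append, List.map_flatten,
        List.map_ofFn, List.map_cons, List.map_replicate, List.append_assoc,
        List.cons_append, List.nil_append, Function.comp, hqq, hpp]
      simp [Function.comp_def]
    rw [hword, valBase_append, valBase_map_mul, ← hV', valBase_append, valBase_replicate]
    have hm0 : m 0 - 1 + 1 = m 0 := Nat.succ_pred_eq_of_pos (hm 0)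
    have hlen : (List.replicate (m 0 - 1) (A 0 * b * Z) ++ [(A 0 * b + B 0) * Z]).length
        = m 0 := by simp [hm0]
    have hval1 : valBase a [(A 0 * b + B 0) * Z] = (A 0 * b + B 0) * Z := by
      simp [valBase]
    rw [hlen, hval1]
    have hgeom : ∑ i ∈ Finset.range (m 0), a ^ i
        = 1 + a * ∑ i ∈ Finset.range (m 0 - 1), a ^ i := by
      obtain ⟨k, hk⟩ : ∃ k, m 0 = k + 1 := ⟨m 0 - 1, (Nat.succ_pred_eq_of_pos (hm 0)).symm⟩
      rw [hk, Finset.sum_range_succ', Nat.add_sub_cancel, pow_zero, Finset.mul_sum,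
        add_comm]
      congr 1
      exact Finset.sum_congr rfl (fun i _ => by ring)
    rw [pow_smul_mat, mul_smul_comm, mul_smul_comm, smul_mul_assoc, smul_smul,
      ← pow_add]
    have hcsum : (∑ i : Fin s, m i.succ) + m 0 = ∑ i : Fin (s + 1), m i := by
      rw [Fin.sum_univ_succ m, Nat.add_comm]
    have hprodA : ∏ i : Fin (s + 1 + 1), A i = A 0 * ∏ i : Fin (s + 1), A i.succ :=
      Fin.prod_univ_succ A
    have hprodC : ∏ i : Fin (s + 1 + 1), C i = C 0 * Z :=
      Fin.prod_univ_succ C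
    have hpow : (a : ℚ) ^ (∑ i : Fin (s + 1), m i)
        = a ^ m 0 * a ^ (∑ i : Fin s, m i.succ) := by
      rw [Fin.sum_univ_succ m, pow_add]
    rw [hcsum, hprodA, hprodC, hpow]
    congr 1
    rw [Matrix.mul_fin_two, Matrix.mul_fin_two, hgeom]
    have hc0 : (Fin.castSucc 0 : Fin (s + 1 + 1)) = 0 := rfl
    rw [hc0]
    ext i j
    fin_cases i <;> fin_cases j <;> simp <;> ring

/-- for `M = c • !![a, b; 0, 1]` and `N_i = !![A_i, B_i; 0, C_i]`
(`i = 1, …, s+1`), there are rationals `q₁, …, q_{s+1}, p₁, …, p_s` such that for all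
positive `m₁, …, m_s`,
`N₁ M^{m₁} ⋯ N_s M^{m_s} N_{s+1} = c^{m₁+⋯+m_s} • !![A₁⋯A_{s+1} a^{m₁+⋯+m_s}, V; 0, C₁⋯C_{s+1}]`
where `V = val_a(q̄₁ p̄₁^{m_s-1} q̄₂ ⋯ q̄_s p̄_s^{m₁-1} q̄_{s+1})`. -/
theorem matrix_product_form (s : ℕ) (hs : 1 ≤ s) (a b c : ℚ) (A B C : Fin (s + 1) → ℚ) :
    ∃ q : Fin (s + 1) → ℚ, ∃ p : Fin s → ℚ,
      ∀ m : Fin s → ℕ, (∀ i, 1 ≤ m i) →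
        (List.ofFn (fun i : Fin s =>
            !![A i.castSucc, B i.castSucc; 0, C i.castSucc] *
              (c • !![a, b; 0, 1]) ^ m i)).prod *
          !![A (Fin.last s), B (Fin.last s); 0, C (Fin.last s)] =
        c ^ (∑ i, m i) •
          !![(∏ i, A i) * a ^ (∑ i, m i),
              valBase a
                ((List.ofFn (fun j : Fin s =>
                    q j.castSucc :: List.replicate (m j.rev - 1) (p j))).flatten ++
                  [q (Fin.last s)]);
              0, ∏ i, C i] :=
  aux s a b c A B C
end

section
/- Let u, v be coprime integers with v ≠ 0 and let r = u/v satisfy |r| > 1. Let m ≥ 1 be an integer, let n ≥ 0, and let a₀, a₁, …, a_n, b₀, b₁, …, b_n be integers with |a_i| ≤ m−1 and |b_i| ≤ m−1 for all i. Suppose ∑_{i=0}^{n} a_i r^i = ∑_{i=0}^{n} b_i r^i. Then there exist rational numbers α₀, α₁, …, α_{n+1}, each of which is an integer, such that α₀ = 0, α_{n+1} = 0, r·α_{i+1} = α_i + a_i − b_i for all i = 0, …, n, and |α_i| ≤ (2m−2)/(|r|−1) for all i = 0, …, n+1. -/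
/-!
Put `c_j = a_j - b_j` and take the carries `α_k = (∑_{j<k} c_j r^j) / r^k`. They satisfy the
recurrence `r α_{k+1} = α_k + c_k` by construction, start at `0`, and end at `0` because the two
expansions agree. Summing the geometric series bounds `|α_k|` by `max |c_j| / (|r| - 1)`.
For integrality, `u^k α_k = v^k ∑_{j<k} c_j r^j` is an integer, while the vanishing of the whole
sum turns `α_k` into minus the tail `∑_{k≤j≤n} c_j r^{j-k}`, so `v^{n+1-k} α_k` is an integer too;
as `u^k` and `v^{n+1-k}` are coprime, `α_k` is an integer.
-/

open Finset

section Carry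

variable {K : Type*} [Field K] (r : K) (c : ℕ → K)

def carry (k : ℕ) : K := (∑ j ∈ range k, c j * r ^ j) / r ^ k

@[simp] lemma carry_zero : carry r c 0 = 0 := by simp [carry]

lemma mul_carry_succ (hr : r ≠ 0) (k : ℕ) : r * carry r c (k + 1) = carry r c k + c k := by
  simp only [carry, sum_range_succ]
  field_simp
  ring

lemma carry_eq_zero_of_sum_eq_zero {N : ℕ} (h : ∑ j ∈ range N, c j * r ^ j = 0) :
    carry r c N = 0 := by
  simp [carry, h]

lemma carry_eq_neg_tail (hr : r ≠ 0) {k N : ℕ} (hkN : k ≤ N)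
    (h : ∑ j ∈ range N, c j * r ^ j = 0) :
    carry r c k = -∑ i ∈ range (N - k), c (k + i) * r ^ i := by
  obtain ⟨d, rfl⟩ := Nat.exists_eq_add_of_le hkN
  have htail : ∑ i ∈ range d, c (k + i) * r ^ (k + i) =
      r ^ k * ∑ i ∈ range d, c (k + i) * r ^ i := by
    rw [mul_sum]
    exact sum_congr rfl fun i _ => by ring
  rw [sum_range_add, htail] at h
  rw [Nat.add_sub_cancel_left, carry, div_eq_iff (pow_ne_zero _ hr)]
  linear_combination h

end Carry

lemma abs_carry_le {K : Type*} [Field K] [LinearOrder K] [IsStrictOrderedRing K] {r C : K}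
    {c : ℕ → K} (hr : 1 < |r|) (hc : ∀ j, |c j| ≤ C) (k : ℕ) :
    |carry r c k| ≤ C / (|r| - 1) := by
  have hr' : 0 < |r| - 1 := sub_pos.2 hr
  have hC : 0 ≤ C := (abs_nonneg _).trans (hc 0)
  have hsum : |∑ j ∈ range k, c j * r ^ j| ≤ C * ∑ j ∈ range k, |r| ^ j := by
    rw [mul_sum]
    refine (abs_sum_le_sum_abs _ _).trans (sum_le_sum fun j _ => ?_)
    rw [abs_mul, abs_pow]
    exact mul_le_mul_of_nonneg_right (hc j) (by positivity)
  rw [carry, abs_div, abs_pow, div_le_div_iff₀ (by positivity) hr']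
  calc |∑ j ∈ range k, c j * r ^ j| * (|r| - 1)
      ≤ C * (∑ j ∈ range k, |r| ^ j) * (|r| - 1) := mul_le_mul_of_nonneg_right hsum hr'.le
    _ = C * (|r| ^ k - 1) := by rw [mul_assoc, geom_sum_mul]
    _ ≤ C * |r| ^ k := by linarith

lemma exists_int_eq_of_isCoprime {p q : ℤ} (h : IsCoprime p q) {x : ℚ} {A B : ℤ}
    (hA : p * x = A) (hB : q * x = B) : ∃ z : ℤ, x = z := by
  obtain ⟨s, t, hst⟩ := h
  refine ⟨s * A + t * B, ?_⟩
  have hst' : (s : ℚ) * p + t * q = 1 := by exact_mod_cast hst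
  push_cast
  linear_combination (s : ℚ) * hA + (t : ℚ) * hB - x * hst'

lemma exists_int_eq_pow_mul_sum {u v : ℤ} (hv : v ≠ 0) (c : ℕ → ℤ) (d : ℕ) :
    ∃ z : ℤ, (v : ℚ) ^ d * ∑ j ∈ range d, (c j : ℚ) * (u / v : ℚ) ^ j = z := by
  refine ⟨∑ j ∈ range d, c j * u ^ j * v ^ (d - j), ?_⟩
  push_cast
  rw [mul_sum]
  refine sum_congr rfl fun j hj => ?_
  rw [div_pow, pow_sub₀ _ (by exact_mod_cast hv) (mem_range.1 hj).le]
  field_simp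

lemma exists_int_eq_carry {u v : ℤ} (hu : u ≠ 0) (hv : v ≠ 0) (huv : IsCoprime u v)
    (c : ℕ → ℤ) {k N : ℕ} (hkN : k ≤ N)
    (h : ∑ j ∈ range N, (c j : ℚ) * (u / v : ℚ) ^ j = 0) :
    ∃ z : ℤ, carry (u / v : ℚ) (fun j => (c j : ℚ)) k = z := by
  have hr : (u / v : ℚ) ≠ 0 := div_ne_zero (by exact_mod_cast hu) (by exact_mod_cast hv)
  obtain ⟨A, hA⟩ := exists_int_eq_pow_mul_sum (u := u) hv c k
  obtain ⟨B, hB⟩ := exists_int_eq_pow_mul_sum (u := u) hv (fun i => c (k + i)) (N - k)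
  refine exists_int_eq_of_isCoprime (huv.pow (m := k) (n := N - k)) (A := A) (B := -B) ?_ ?_
  · rw [← hA, carry, div_pow]
    push_cast
    field_simp
  · rw [carry_eq_neg_tail _ _ hr hkN h]
    push_cast
    rw [← hB]
    ring

theorem carry_sequence_exists_general (u v : ℤ) (hv : v ≠ 0) (huv : IsCoprime u v) (r : ℚ)
    (hr : r = (u : ℚ) / (v : ℚ)) (hr1 : 1 < |r|) (m : ℕ) (n : ℕ)
    (a b : Fin (n + 1) → ℤ)
    (ha : ∀ i, |a i| ≤ (m : ℤ) - 1) (hb : ∀ i, |b i| ≤ (m : ℤ) - 1)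
    (hsum : ∑ i : Fin (n + 1), (a i : ℚ) * r ^ (i : ℕ) =
      ∑ i : Fin (n + 1), (b i : ℚ) * r ^ (i : ℕ)) :
    ∃ α : Fin (n + 2) → ℚ,
      (∀ i, ∃ z : ℤ, α i = (z : ℚ)) ∧
      α 0 = 0 ∧ α (Fin.last (n + 1)) = 0 ∧
      (∀ i : Fin (n + 1), r * α i.succ = α i.castSucc + (a i : ℚ) - (b i : ℚ)) ∧
      (∀ i, |α i| ≤ (2 * (m : ℚ) - 2) / (|r| - 1)) := by
  subst hr
  have hr0 : (u / v : ℚ) ≠ 0 := by rintro h; norm_num [h] at hr1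
  have hu : u ≠ 0 := by rintro rfl; simp at hr0
  set c : ℕ → ℤ := fun j => if h : j < n + 1 then a ⟨j, h⟩ - b ⟨j, h⟩ else 0
  have hc : ∀ i : Fin (n + 1), c i = a i - b i := fun i => dif_pos i.isLt
  have hcC : ∀ j, |(c j : ℚ)| ≤ 2 * (m : ℚ) - 2 := by
    intro j
    have : |c j| ≤ 2 * (m : ℤ) - 2 := by
      unfold c
      split_ifs with h
      · exact (abs_sub _ _).trans (by linarith [ha ⟨j, h⟩, hb ⟨j, h⟩])
      · rw [abs_zero]
        linarith [abs_nonneg (a 0), ha 0]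
    exact_mod_cast this
  have hS : ∑ j ∈ range (n + 1), (c j : ℚ) * (u / v : ℚ) ^ j = 0 := by
    rw [← Fin.sum_univ_eq_sum_range (fun j => (c j : ℚ) * (u / v : ℚ) ^ j)]
    simp [hc, sub_mul, hsum]
  refine ⟨fun k => carry (u / v : ℚ) (fun j => (c j : ℚ)) k,
    fun k => exists_int_eq_carry hu hv huv c k.is_le hS, carry_zero _ _,
    carry_eq_zero_of_sum_eq_zero _ _ hS, fun i => ?_, fun k => abs_carry_le hr1 hcC k⟩
  simp [mul_carry_succ _ _ hr0, hc]
  ring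

/-- let `r = u/v` with `u, v` coprime integers, `v ≠ 0`, `|r| > 1`, let
`m ≥ 1`, and let `a_0, …, a_n, b_0, …, b_n` be integers of absolute value at most `m - 1`
with `∑ a_i r^i = ∑ b_i r^i`. Then there is a sequence of carries `α_0, …, α_{n+1}`,
each an integer, with `α_0 = α_{n+1} = 0`, `r·α_{i+1} = α_i + a_i − b_i` for all
`i = 0, …, n`, and `|α_i| ≤ (2m−2)/(|r|−1)` for all `i`. -/
theorem carry_sequence_exists (u v : ℤ) (hv : v ≠ 0) (huv : IsCoprime u v) (r : ℚ)
    (hr : r = (u : ℚ) / (v : ℚ)) (hr1 : 1 < |r|) (m : ℕ) (hm : 1 ≤ m) (n : ℕ)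
    (a b : Fin (n + 1) → ℤ)
    (ha : ∀ i, |a i| ≤ (m : ℤ) - 1) (hb : ∀ i, |b i| ≤ (m : ℤ) - 1)
    (hsum : ∑ i : Fin (n + 1), (a i : ℚ) * r ^ (i : ℕ) =
      ∑ i : Fin (n + 1), (b i : ℚ) * r ^ (i : ℕ)) :
    ∃ α : Fin (n + 2) → ℚ,
      (∀ i, ∃ z : ℤ, α i = (z : ℚ)) ∧
      α 0 = 0 ∧ α (Fin.last (n + 1)) = 0 ∧
      (∀ i : Fin (n + 1), r * α i.succ = α i.castSucc + (a i : ℚ) - (b i : ℚ)) ∧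
      (∀ i, |α i| ≤ (2 * (m : ℚ) - 2) / (|r| - 1)) :=
  carry_sequence_exists_general u v hv huv r hr hr1 m n a b ha hb hsum
end

section
/- Let M = [[3, 0], [0, 1]] and N = [[2, 1], [0, 3]] be 2×2 rational matrices. Then for all natural numbers m, n, M^m N M^n = [[2·3^{m+n}, 3^m], [0, 3]], and consequently the map ℕ² → Matrix (Fin 2) (Fin 2) ℚ sending (m, n) to M^m N M^n is injective. -/
lemma pow_aux (m : ℕ) : (!![3, 0; 0, 1] : Matrix (Fin 2) (Fin 2) ℚ) ^ m
    = !![3 ^ m, 0; 0, 1] := by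
  induction m with
  | zero => simp [Matrix.one_fin_two]
  | succ k ih =>
    rw [pow_succ, ih]
    norm_num [Matrix.mul_fin_two, pow_succ]

/-- with `M = !![3,0;0,1]` and `N = !![2,1;0,3]` over ℚ,
`M^m * N * M^n = !![2·3^{m+n}, 3^m; 0, 3]`, and `(m, n) ↦ M^m N M^n` is injective. -/
theorem example_one (M N : Matrix (Fin 2) (Fin 2) ℚ)
    (hM : M = !![3, 0; 0, 1]) (hN : N = !![2, 1; 0, 3]) :
    (∀ m n : ℕ, M ^ m * N * M ^ n = !![2 * 3 ^ (m + n), 3 ^ m; 0, 3]) ∧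
      Function.Injective (fun p : ℕ × ℕ => M ^ p.1 * N * M ^ p.2) := by
  subst hM hN
  have key : ∀ m n : ℕ, (!![3, 0; 0, 1] : Matrix (Fin 2) (Fin 2) ℚ) ^ m * !![2, 1; 0, 3] *
      (!![3, 0; 0, 1] : Matrix (Fin 2) (Fin 2) ℚ) ^ n = !![2 * 3 ^ (m + n), 3 ^ m; 0, 3] := by
    intro m n
    rw [pow_aux, pow_aux]
    norm_num [Matrix.mul_fin_two, pow_add]
    ring
  refine ⟨key, ?_⟩
  rintro ⟨m, n⟩ ⟨m', n'⟩ h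
  simp only [key] at h
  have h01 := congrFun (congrFun h 0) 1
  have h00 := congrFun (congrFun h 0) 0
  simp [Matrix.cons_val_zero, Matrix.cons_val_one] at h01 h00
  have : m = m' ∧ n = n' := by omega
  simp [this.1, this.2]
end

section
/- Let b, c ∈ ℚ with c ≠ 0, let M = c·[[1, b], [0, 1]], and let N₂ = [[A₂, B₂], [0, C₂]], N₃ = [[A₃, B₃], [0, C₃]] be any upper-triangular 2×2 rational matrices. Then there exist two distinct triples (m₁, m₂, m₃) ≠ (n₁, n₂, n₃) of natural numbers such that m₁ + m₂ + m₃ = n₁ + n₂ + n₃, C₂C₃m₁ + A₂C₃m₂ + A₂A₃m₃ = C₂C₃n₁ + A₂C₃n₂ + A₂A₃n₃, and M^{m₁} N₂ M^{m₂} N₃ M^{m₃} = M^{n₁} N₂ M^{n₂} N₃ M^{n₃}. In particular, the map ℕ³ → Matrix (Fin 2) (Fin 2) ℚ sending (m₁, m₂, m₃) to M^{m₁} N₂ M^{m₂} N₃ M^{m₃} is not injective. -/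
lemma pow_formula (b c : ℚ) (k : ℕ) :
    (c • !![1, b; 0, 1] : Matrix (Fin 2) (Fin 2) ℚ) ^ k
      = c ^ k • !![1, k * b; 0, 1] := by
  induction k with
  | zero => simp [Matrix.one_fin_two]
  | succ k ih =>
    rw [pow_succ, ih, Matrix.smul_mul, Matrix.mul_smul, smul_smul, ← pow_succ,
      Matrix.mul_fin_two]
    congr 1
    ext i j
    fin_cases i <;> fin_cases j <;> (simp; try push_cast) <;> try ring

lemma prod_formula (b c A₂ B₂ C₂ A₃ B₃ C₃ : ℚ) (m₁ m₂ m₃ : ℕ) :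
    (c • !![1, b; 0, 1] : Matrix (Fin 2) (Fin 2) ℚ) ^ m₁ * !![A₂, B₂; 0, C₂] *
      (c • !![1, b; 0, 1]) ^ m₂ * !![A₃, B₃; 0, C₃] * (c • !![1, b; 0, 1]) ^ m₃
    = c ^ (m₁ + m₂ + m₃) •
        !![A₂ * A₃,
           b * (C₂ * C₃ * m₁ + A₂ * C₃ * m₂ + A₂ * A₃ * m₃) + (A₂ * B₃ + B₂ * C₃);
           0, C₂ * C₃] := by
  rw [pow_formula, pow_formula, pow_formula]
  simp only [Matrix.smul_mul, Matrix.mul_smul, smul_smul, ← pow_add,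
    Matrix.mul_fin_two]
  rw [show m₃ + (m₂ + m₁) = m₁ + m₂ + m₃ by ring]
  congr 1
  ext i j
  fin_cases i <;> fin_cases j <;> (simp; try ring)

/-- for `M = c • !![1, b; 0, 1]` with `c ≠ 0` and any upper-triangular
`N₂ = !![A₂, B₂; 0, C₂]`, `N₃ = !![A₃, B₃; 0, C₃]`, there are distinct triples
`(m₁,m₂,m₃) ≠ (n₁,n₂,n₃)` with equal sums, equal weighted sums
`C₂C₃m₁ + A₂C₃m₂ + A₂A₃m₃ = C₂C₃n₁ + A₂C₃n₂ + A₂A₃n₃`, and equal matrix products;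
in particular `(m₁,m₂,m₃) ↦ M^{m₁} N₂ M^{m₂} N₃ M^{m₃}` is not injective. -/
theorem example_four (b c A₂ B₂ C₂ A₃ B₃ C₃ : ℚ) (hc : c ≠ 0)
    (M N₂ N₃ : Matrix (Fin 2) (Fin 2) ℚ)
    (hM : M = c • !![1, b; 0, 1]) (hN₂ : N₂ = !![A₂, B₂; 0, C₂])
    (hN₃ : N₃ = !![A₃, B₃; 0, C₃]) :
    (∃ m n : ℕ × ℕ × ℕ, m ≠ n ∧
        m.1 + m.2.1 + m.2.2 = n.1 + n.2.1 + n.2.2 ∧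
        C₂ * C₃ * m.1 + A₂ * C₃ * m.2.1 + A₂ * A₃ * m.2.2 =
          C₂ * C₃ * n.1 + A₂ * C₃ * n.2.1 + A₂ * A₃ * n.2.2 ∧
        M ^ m.1 * N₂ * M ^ m.2.1 * N₃ * M ^ m.2.2 =
          M ^ n.1 * N₂ * M ^ n.2.1 * N₃ * M ^ n.2.2) ∧
      ¬ Function.Injective
        (fun m : ℕ × ℕ × ℕ => M ^ m.1 * N₂ * M ^ m.2.1 * N₃ * M ^ m.2.2) := by
  subst hM hN₂ hN₃
  have key : ∀ m n : ℕ × ℕ × ℕ,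
      m.1 + m.2.1 + m.2.2 = n.1 + n.2.1 + n.2.2 →
      C₂ * C₃ * m.1 + A₂ * C₃ * m.2.1 + A₂ * A₃ * m.2.2 =
        C₂ * C₃ * n.1 + A₂ * C₃ * n.2.1 + A₂ * A₃ * n.2.2 →
      (c • !![1, b; 0, 1] : Matrix (Fin 2) (Fin 2) ℚ) ^ m.1 * !![A₂, B₂; 0, C₂] *
          (c • !![1, b; 0, 1]) ^ m.2.1 * !![A₃, B₃; 0, C₃] * (c • !![1, b; 0, 1]) ^ m.2.2 =
        (c • !![1, b; 0, 1]) ^ n.1 * !![A₂, B₂; 0, C₂] *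
          (c • !![1, b; 0, 1]) ^ n.2.1 * !![A₃, B₃; 0, C₃] * (c • !![1, b; 0, 1]) ^ n.2.2 := by
    intro m n h1 h2
    rw [prod_formula, prod_formula, h1, h2]
  have main : ∃ m n : ℕ × ℕ × ℕ, m ≠ n ∧
      m.1 + m.2.1 + m.2.2 = n.1 + n.2.1 + n.2.2 ∧
      C₂ * C₃ * m.1 + A₂ * C₃ * m.2.1 + A₂ * A₃ * m.2.2 =
        C₂ * C₃ * n.1 + A₂ * C₃ * n.2.1 + A₂ * A₃ * n.2.2 := by
    by_cases h12 : C₂ * C₃ = A₂ * C₃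
    · exact ⟨(1, 0, 0), (0, 1, 0), by decide, by decide, by push_cast; linear_combination h12⟩
    by_cases h23 : A₂ * C₃ = A₂ * A₃
    · exact ⟨(0, 1, 0), (0, 0, 1), by decide, by decide, by push_cast; linear_combination h23⟩
    by_cases h13 : C₂ * C₃ = A₂ * A₃
    · exact ⟨(1, 0, 0), (0, 0, 1), by decide, by decide, by push_cast; linear_combination h13⟩
    -- generic case
    set w₁ : ℚ := C₂ * C₃ with hw₁
    set w₂ : ℚ := A₂ * C₃ with hw₂
    set w₃ : ℚ := A₂ * A₃ with hw₃
    set q₁ : ℚ := w₃ - w₂ with hq₁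
    set q₂ : ℚ := w₁ - w₃ with hq₂
    set q₃ : ℚ := w₂ - w₁ with hq₃
    have hq₁0 : q₁ ≠ 0 := sub_ne_zero.mpr (Ne.symm h23)
    have e : ∀ q : ℚ, (q.num : ℚ) = q * q.den := by
      intro q
      have hd : (q.den : ℚ) ≠ 0 := by exact_mod_cast q.den_nz
      rw [eq_comm, ← eq_div_iff hd, eq_comm, Rat.num_div_den]
    set z₁ : ℤ := q₁.num * (q₂.den * q₃.den) with hz₁
    set z₂ : ℤ := q₂.num * (q₁.den * q₃.den) with hz₂
    set z₃ : ℤ := q₃.num * (q₁.den * q₂.den) with hz₃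
    have hz₁0 : z₁ ≠ 0 := by
      apply mul_ne_zero (Rat.num_ne_zero.mpr hq₁0)
      exact_mod_cast Nat.mul_ne_zero q₂.den_nz q₃.den_nz
    have hc₁ : (z₁ : ℚ) = q₁ * q₁.den * q₂.den * q₃.den := by
      rw [hz₁]; push_cast; rw [e q₁]; ring
    have hc₂ : (z₂ : ℚ) = q₂ * q₁.den * q₂.den * q₃.den := by
      rw [hz₂]; push_cast; rw [e q₂]; ring
    have hc₃ : (z₃ : ℚ) = q₃ * q₁.den * q₂.den * q₃.den := by
      rw [hz₃]; push_cast; rw [e q₃]; ring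
    have hsum : z₁ + z₂ + z₃ = 0 := by
      have : ((z₁ + z₂ + z₃ : ℤ) : ℚ) = 0 := by
        push_cast
        rw [hc₁, hc₂, hc₃, hq₁, hq₂, hq₃]; ring
      exact_mod_cast this
    have hwz : w₁ * (z₁ : ℚ) + w₂ * z₂ + w₃ * z₃ = 0 := by
      rw [hc₁, hc₂, hc₃, hq₁, hq₂, hq₃]; ring
    refine ⟨(z₁.toNat, z₂.toNat, z₃.toNat), ((-z₁).toNat, (-z₂).toNat, (-z₃).toNat), ?_, ?_, ?_⟩
    · intro h
      have h1 : z₁.toNat = (-z₁).toNat := congrArg Prod.fst h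
      omega
    · simp only
      omega
    · have t1 : ((z₁.toNat : ℕ) : ℚ) = (z₁ : ℚ) + ((-z₁).toNat : ℕ) := by
        have : (z₁.toNat : ℤ) = z₁ + ((-z₁).toNat : ℤ) := by omega
        exact_mod_cast this
      have t2 : ((z₂.toNat : ℕ) : ℚ) = (z₂ : ℚ) + ((-z₂).toNat : ℕ) := by
        have : (z₂.toNat : ℤ) = z₂ + ((-z₂).toNat : ℤ) := by omega
        exact_mod_cast this
      have t3 : ((z₃.toNat : ℕ) : ℚ) = (z₃ : ℚ) + ((-z₃).toNat : ℕ) := by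
        have : (z₃.toNat : ℤ) = z₃ + ((-z₃).toNat : ℤ) := by omega
        exact_mod_cast this
      simp only
      rw [t1, t2, t3]
      linear_combination hwz
  obtain ⟨m, n, hne, hs, hw⟩ := main
  exact ⟨⟨m, n, hne, hs, hw, key m n hs hw⟩,
    fun hinj => hne (hinj (key m n hs hw))⟩
end

section
/- Let t ≥ 1 be an integer and let i ∈ {1, …, t}. Then there exists a positive integer k (one may take k = 2t) and upper-triangular matrices A, M, N, B in ℤ^{k×k} such that for all natural numbers a₁, …, a_t: A·M^{a₁}·N·M^{a₂}·N ⋯ N·M^{a_t}·B = a_i · E_k, where E_k is the k×k matrix whose only nonzero entry is a 1 in position (1, k). -/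
/-!
Take `k = t + 1`, index from `0`, and follow the row vector `e₀ P` through
`P = M^{a₀} N M^{a₁} N ⋯ N M^{a_{t-1}}`. Positions `0, …, t - 1` carry a walker and position `t`
a tally: `M = 1 + E_{i,t}` adds the walker's presence at position `i` to the tally, `N` moves the
walker one step to the right, and both fix the tally. The walker meets `M^{a_j}` at position `j`,
so the tally ends at `a_i`; `A = E_{0,0}` and `B = E_{t,t}` cut out the entry `P_{0,t}`.
-/

/-- A square integer matrix is upper triangular if every entry below the diagonal is 0. -/
def UpperTri {k : ℕ} (A : Matrix (Fin k) (Fin k) ℤ) : Prop :=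
  ∀ p q : Fin k, (q : ℕ) < (p : ℕ) → A p q = 0

/-- The `k × k` integer matrix whose only nonzero entry is a `1` in position `(1, k)`. -/
def Emat (k : ℕ) : Matrix (Fin k) (Fin k) ℤ :=
  Matrix.of fun i j => if (i : ℕ) = 0 ∧ (j : ℕ) = k - 1 then 1 else 0

open Matrix

theorem List.prod_intersperse_ofFn_succ {α : Type*} [Monoid α] (sep : α) {n : ℕ}
    (f : Fin (n + 2) → α) :
    (List.intersperse sep (List.ofFn f)).prod =
      f 0 * sep * (List.intersperse sep (List.ofFn fun j => f j.succ)).prod := by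
  rw [List.ofFn_succ, List.ofFn_succ (f := fun j => f j.succ), List.intersperse_cons_cons]
  simp only [List.prod_cons, mul_assoc]

section Walk

variable {ι R : Type*} [Fintype ι] [DecidableEq ι] [Semiring R] {M N : Matrix ι ι R}
  {u : ι → R}

theorem vecMul_pow_eq_add_smul {v : ι → R} {c : R} (hv : v ᵥ* M = v + c • u)
    (hu : u ᵥ* M = u) (a : ℕ) : v ᵥ* M ^ a = v + ((a : R) * c) • u := by
  induction a with
  | zero => simp
  | succ a ih =>
    rw [pow_succ, ← vecMul_vecMul, ih, add_vecMul, smul_vecMul, hv, hu]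
    push_cast
    rw [add_mul, one_mul, add_smul, add_assoc, add_comm (c • u)]

theorem vecMul_pow_eq_self (hu : u ᵥ* M = u) (a : ℕ) : u ᵥ* M ^ a = u := by
  simpa using vecMul_pow_eq_add_smul (c := 0) (by simpa using hu) hu a

theorem vecMul_prod_intersperse_ofFn_pow_eq_self (hM : u ᵥ* M = u) (hN : u ᵥ* N = u)
    (n : ℕ) (a : Fin (n + 1) → ℕ) :
    u ᵥ* (List.intersperse N (List.ofFn fun j => M ^ a j)).prod = u := by
  induction n with
  | zero => simp [vecMul_pow_eq_self hM]
  | succ n ih =>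
    rw [List.prod_intersperse_ofFn_succ, ← vecMul_vecMul, ← vecMul_vecMul,
      vecMul_pow_eq_self hM, hN, ih]

theorem vecMul_prod_intersperse_ofFn_pow {e : ℕ → ι → R} {c : ℕ → R}
    (hMe : ∀ m, e m ᵥ* M = e m + c m • u) (hMu : u ᵥ* M = u)
    (hNe : ∀ m, e m ᵥ* N = e (m + 1)) (hNu : u ᵥ* N = u) (n : ℕ) (a : Fin (n + 1) → ℕ)
    (m : ℕ) :
    e m ᵥ* (List.intersperse N (List.ofFn fun j => M ^ a j)).prod =
      e (m + n) + (∑ j, (a j : R) * c (m + j)) • u := by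
  induction n generalizing m with
  | zero => simp [vecMul_pow_eq_add_smul (hMe m) hMu]
  | succ n ih =>
    rw [List.prod_intersperse_ofFn_succ, ← vecMul_vecMul, ← vecMul_vecMul,
      vecMul_pow_eq_add_smul (hMe m) hMu, add_vecMul, smul_vecMul, hNe, hNu, add_vecMul,
      smul_vecMul, ih, vecMul_prod_intersperse_ofFn_pow_eq_self hMu hNu,
      Fin.sum_univ_succ (fun j => (a j : R) * c (m + j)), Fin.val_zero, add_zero, add_smul,
      show m + 1 + n = m + (n + 1) by omega]
    have hshift (j : Fin (n + 1)) : m + 1 + (j : ℕ) = m + (j.succ : ℕ) := by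
      rw [Fin.val_succ]; omega
    simp only [hshift]
    abel

end Walk

theorem emat_succ (t : ℕ) : Emat (t + 1) = single 0 (Fin.last t) 1 := by
  ext p q
  simp only [Emat, of_apply, single_apply, Fin.ext_iff, Fin.val_zero, Fin.val_last, eq_comm,
    add_tsub_cancel_right]

namespace CoordinateWalk

variable (t : ℕ)

/-- Zero once the walker has left the positions `0, …, t - 1`, so that `walker_vecMul_shift`
holds without a side condition. -/
def walker (m : ℕ) : Fin (t + 1) → ℤ :=
  if h : m < t then Pi.single (Fin.castSucc ⟨m, h⟩) 1 else 0

def tally : Fin (t + 1) → ℤ := Pi.single (Fin.last t) 1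

def shift : Matrix (Fin (t + 1)) (Fin (t + 1)) ℤ :=
  Matrix.of fun p => if p = Fin.last t then tally t else walker t ((p : ℕ) + 1)

def count (i : Fin t) : Matrix (Fin (t + 1)) (Fin (t + 1)) ℤ :=
  1 + single i.castSucc (Fin.last t) 1

variable {t}

theorem walker_apply (m : ℕ) (q : Fin (t + 1)) :
    walker t m q = if (q : ℕ) = m ∧ m < t then 1 else 0 := by
  unfold walker
  split_ifs <;> simp_all [Pi.single_apply, Fin.ext_iff]

theorem tally_apply (q : Fin (t + 1)) : tally t q = if (q : ℕ) = t then 1 else 0 := by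
  simp [tally, Pi.single_apply, Fin.ext_iff]

theorem walker_of_le {m : ℕ} (hm : t ≤ m) : walker t m = 0 :=
  dif_neg (by omega)

theorem walker_vecMul_of_lt {m : ℕ} (hm : m < t) (A : Matrix (Fin (t + 1)) (Fin (t + 1)) ℤ) :
    walker t m ᵥ* A = A (Fin.castSucc ⟨m, hm⟩) := by
  rw [walker, dif_pos hm, single_one_vecMul, row]

theorem walker_vecMul_shift (m : ℕ) : walker t m ᵥ* shift t = walker t (m + 1) := by
  by_cases hm : m < t
  · ext q
    simp only [walker_vecMul_of_lt hm, shift, of_apply, Fin.ext_iff, Fin.val_last,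
      Fin.val_castSucc, ite_apply, walker_apply]
    split_ifs <;> omega
  · rw [walker_of_le (by omega), walker_of_le (by omega), zero_vecMul]

theorem tally_vecMul_shift : tally t ᵥ* shift t = tally t := by
  rw [tally, single_one_vecMul, ← tally]
  ext q
  simp [shift]

theorem walker_vecMul_count (i : Fin t) (m : ℕ) :
    walker t m ᵥ* count t i = walker t m + (if m = i then (1 : ℤ) else 0) • tally t := by
  by_cases hm : m < t
  · ext q
    simp only [walker_vecMul_of_lt hm, count, Matrix.add_apply, one_apply, single_apply,
      Fin.ext_iff, Fin.val_castSucc, Fin.val_last, walker_apply, tally_apply, Pi.add_apply,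
      Pi.smul_apply, smul_eq_mul]
    split_ifs <;> omega
  · rw [walker_of_le (by omega), zero_vecMul, if_neg (by omega), zero_smul, add_zero]

theorem tally_vecMul_count (i : Fin t) : tally t ᵥ* count t i = tally t := by
  rw [tally, single_one_vecMul, ← tally]
  ext q
  simp only [count, row_apply, Matrix.add_apply, one_apply, single_apply, Fin.ext_iff,
    Fin.val_castSucc, Fin.val_last, tally_apply]
  split_ifs <;> omega

theorem isUpperTriangular_count (i : Fin t) : (count t i).IsUpperTriangular :=
  blockTriangular_one.add (blockTriangular_single (Fin.castSucc_lt_last i).le 1)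

theorem isUpperTriangular_shift : (shift t).IsUpperTriangular := by
  intro p q hqp
  rw [id, id, Fin.lt_def] at hqp
  simp only [shift, of_apply, ite_apply, walker_apply, tally_apply, Fin.ext_iff, Fin.val_last]
  split_ifs <;> omega

theorem prod_intersperse_shift_count_zero_last {n : ℕ} (i : Fin (n + 1))
    (a : Fin (n + 1) → ℕ) :
    (List.intersperse (shift (n + 1)) (List.ofFn fun j => count (n + 1) i ^ a j)).prod 0
      (Fin.last _) = a i := by
  have hwalk := vecMul_prod_intersperse_ofFn_pow (walker_vecMul_count i) (tally_vecMul_count i)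
    walker_vecMul_shift tally_vecMul_shift n a 0
  rw [walker_vecMul_of_lt n.succ_pos, Fin.zero_eta, Fin.castSucc_zero] at hwalk
  simpa only [Pi.add_apply, Pi.smul_apply, walker_apply, tally_apply, Fin.val_last, zero_add,
    Fin.val_inj, mul_ite, mul_one, mul_zero, Finset.sum_ite_eq', Finset.mem_univ, if_true,
    smul_eq_mul, Nat.succ_ne_self, false_and, if_false] using congrFun hwalk (Fin.last _)

end CoordinateWalk

open CoordinateWalk in
theorem coordinate_representable_general (t : ℕ) (i : Fin t) :
    ∃ k : ℕ, 0 < k ∧ ∃ A M N B : Matrix (Fin k) (Fin k) ℤ,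
      UpperTri A ∧ UpperTri M ∧ UpperTri N ∧ UpperTri B ∧
      ∀ a : Fin t → ℕ,
        ((A :: List.intersperse N (List.ofFn fun j : Fin t => M ^ a j)) ++ [B]).prod =
          (a i : ℤ) • Emat k := by
  obtain ⟨n, rfl⟩ := Nat.exists_eq_add_one.2 i.pos
  -- `UpperTri` is `IsUpperTriangular` on `Fin k` unfolded.
  refine ⟨n + 2, by omega, single 0 0 1, count (n + 1) i, shift (n + 1),
    single (Fin.last _) (Fin.last _) 1, blockTriangular_single le_rfl 1,
    isUpperTriangular_count i, isUpperTriangular_shift, blockTriangular_single le_rfl 1,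
    fun a => ?_⟩
  rw [List.prod_append, List.prod_cons, List.prod_singleton, single_mul_mul_single, one_mul,
    mul_one, prod_intersperse_shift_count_zero_last, emat_succ, smul_single, smul_eq_mul,
    mul_one]

/-- for `t ≥ 1` and `i ∈ {1, …, t}` there is a positive integer `k` and
upper-triangular `A, M, N, B ∈ ℤ^{k×k}` with
`A M^{a₁} N M^{a₂} N ⋯ N M^{a_t} B = a_i · E_k` for all `a₁, …, a_t ∈ ℕ`.
(The product alternates powers of `M` separated by single factors `N`.) -/
theorem coordinate_representable (t : ℕ) (ht : 1 ≤ t) (i : Fin t) :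
    ∃ k : ℕ, 0 < k ∧ ∃ A M N B : Matrix (Fin k) (Fin k) ℤ,
      UpperTri A ∧ UpperTri M ∧ UpperTri N ∧ UpperTri B ∧
      ∀ a : Fin t → ℕ,
        ((A :: List.intersperse N (List.ofFn fun j : Fin t => M ^ a j)) ++ [B]).prod =
          (a i : ℤ) • Emat k :=
  coordinate_representable_general t i
end

section
/- Let t ≥ 1 be an integer and let p(x₁, …, x_t) be a polynomial in t variables with integer coefficients. Then there exists a positive integer k and upper-triangular matrices A, M, N, B in ℤ^{k×k} such that for all natural numbers a₁, …, a_t: A·M^{a₁}·N·M^{a₂}·N ⋯ N·M^{a_t}·B = p(a₁, …, a_t) · E_k, where E_k is the k×k matrix whose only nonzero entry is a 1 in position (1, k). -/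
open Matrix Kronecker

/-- interspersed product -/
def ip {n : Type*} [Fintype n] [DecidableEq n] (M N : Matrix n n ℤ) (l : List ℕ) :
    Matrix n n ℤ :=
  (List.intersperse N (l.map (M ^ ·))).prod

theorem ip_def {n : Type*} [Fintype n] [DecidableEq n] (M N : Matrix n n ℤ) (l : List ℕ) :
    ip M N l = (List.intersperse N (l.map (M ^ ·))).prod := rfl

theorem ip_nil {n : Type*} [Fintype n] [DecidableEq n] (M N : Matrix n n ℤ) :
    ip M N [] = 1 := rfl

theorem ip_single {n : Type*} [Fintype n] [DecidableEq n] (M N : Matrix n n ℤ) (x : ℕ) :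
    ip M N [x] = M ^ x := by simp [ip]

theorem ip_cons_cons {n : Type*} [Fintype n] [DecidableEq n] (M N : Matrix n n ℤ)
    (x y : ℕ) (l : List ℕ) :
    ip M N (x :: y :: l) = M ^ x * (N * ip M N (y :: l)) := by
  simp [ip, List.intersperse_cons_cons]

theorem ip_map {n m : Type*} [Fintype n] [DecidableEq n] [Fintype m] [DecidableEq m]
    (φ : Matrix n n ℤ →+* Matrix m m ℤ) (M N : Matrix n n ℤ) :
    ∀ l : List ℕ, φ (ip M N l) = ip (φ M) (φ N) l
  | [] => by simp [ip_nil]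
  | [x] => by simp [ip_single, map_pow]
  | x :: y :: l => by
      simp only [ip_cons_cons, _root_.map_mul, map_pow, ip_map φ M N (y :: l)]

theorem pow_fromBlocks {n m : Type*} [Fintype n] [DecidableEq n] [Fintype m] [DecidableEq m]
    (M : Matrix n n ℤ) (M' : Matrix m m ℤ) (x : ℕ) :
    (Matrix.fromBlocks M 0 0 M') ^ x = Matrix.fromBlocks (M ^ x) 0 0 (M' ^ x) := by
  induction x with
  | zero => simp [Matrix.fromBlocks_one]
  | succ x ih => rw [pow_succ, pow_succ, pow_succ, ih, Matrix.fromBlocks_multiply]; simp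

theorem ip_fromBlocks {n m : Type*} [Fintype n] [DecidableEq n] [Fintype m] [DecidableEq m]
    (M N : Matrix n n ℤ) (M' N' : Matrix m m ℤ) :
    ∀ l : List ℕ, ip (Matrix.fromBlocks M 0 0 M') (Matrix.fromBlocks N 0 0 N') l =
      Matrix.fromBlocks (ip M N l) 0 0 (ip M' N' l)
  | [] => by simp [ip_nil, Matrix.fromBlocks_one]
  | [x] => by simp [ip_single, pow_fromBlocks]
  | x :: y :: l => by
      simp only [ip_cons_cons, ip_fromBlocks M N M' N' (y :: l), pow_fromBlocks,
        Matrix.fromBlocks_multiply]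
      simp

theorem pow_kron {n m : Type*} [Fintype n] [DecidableEq n] [Fintype m] [DecidableEq m]
    (M : Matrix n n ℤ) (M' : Matrix m m ℤ) (x : ℕ) :
    (M ⊗ₖ M') ^ x = (M ^ x) ⊗ₖ (M' ^ x) := by
  induction x with
  | zero => simp [Matrix.one_kronecker_one]
  | succ x ih => rw [pow_succ, pow_succ, pow_succ, ih, ← Matrix.mul_kronecker_mul]

theorem ip_kron {n m : Type*} [Fintype n] [DecidableEq n] [Fintype m] [DecidableEq m]
    (M N : Matrix n n ℤ) (M' N' : Matrix m m ℤ) :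
    ∀ l : List ℕ, ip (M ⊗ₖ M') (N ⊗ₖ N') l = (ip M N l) ⊗ₖ (ip M' N' l)
  | [] => by simp [ip_nil, Matrix.one_kronecker_one]
  | [x] => by simp [ip_single, pow_kron]
  | x :: y :: l => by
      simp only [ip_cons_cons, ip_kron M N M' N' (y :: l), pow_kron,
        ← Matrix.mul_kronecker_mul]

theorem ip_one {n : Type*} [Fintype n] [DecidableEq n] :
    ∀ l : List ℕ, ip (1 : Matrix n n ℤ) 1 l = 1
  | [] => by simp [ip_nil]
  | [x] => by simp [ip_single]
  | x :: y :: l => by rw [ip_cons_cons, ip_one (y :: l)]; simp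

def MRep (t : ℕ) (f : (Fin t → ℕ) → ℤ) : Prop :=
  ∃ k : ℕ, 0 < k ∧ ∃ (u v : Fin k → ℤ) (M N : Matrix (Fin k) (Fin k) ℤ),
    UpperTri M ∧ UpperTri N ∧
    ∀ a : Fin t → ℕ, u ⬝ᵥ (ip M N (List.ofFn a)).mulVec v = f a

theorem upperTri_one {k : ℕ} : UpperTri (1 : Matrix (Fin k) (Fin k) ℤ) := by
  intro p q h
  exact Matrix.one_apply_ne (by intro e; omega)

theorem MRep.const (t : ℕ) (c : ℤ) : MRep t (fun _ => c) := by
  refine ⟨1, one_pos, fun _ => c, fun _ => 1, 1, 1, upperTri_one, upperTri_one, fun a => ?_⟩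
  simp [ip_one, Matrix.one_mulVec, dotProduct]

theorem dot_reindex {n m : Type} [Fintype n] [Fintype m] [DecidableEq n] [DecidableEq m]
    (e : n ≃ m) (u v : n → ℤ) (X : Matrix n n ℤ) :
    (fun x => u (e.symm x)) ⬝ᵥ (Matrix.reindex e e X).mulVec (fun x => v (e.symm x)) =
      u ⬝ᵥ X.mulVec v := by
  simp only [Matrix.reindex_apply, dotProduct, Matrix.mulVec, Matrix.submatrix_apply]
  rw [← Equiv.sum_comp e (fun x => u (e.symm x) * _)]
  refine Finset.sum_congr rfl fun p _ => ?_
  simp only [Equiv.symm_apply_apply]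
  congr 1
  rw [← Equiv.sum_comp e (fun x => X _ (e.symm x) * v (e.symm x))]
  simp

theorem upperTri_blocks {k1 k2 : ℕ} {M1 : Matrix (Fin k1) (Fin k1) ℤ}
    {M2 : Matrix (Fin k2) (Fin k2) ℤ} (h1 : UpperTri M1) (h2 : UpperTri M2) :
    UpperTri ((Matrix.reindexAlgEquiv ℤ ℤ finSumFinEquiv)
      (Matrix.fromBlocks M1 0 0 M2) : Matrix (Fin (k1 + k2)) (Fin (k1 + k2)) ℤ) := by
  intro p q hpq
  simp only [Matrix.reindexAlgEquiv_apply, Matrix.reindex_apply, Matrix.submatrix_apply]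
  have hp := (finSumFinEquiv.apply_symm_apply p)
  have hq := (finSumFinEquiv.apply_symm_apply q)
  rcases hep : finSumFinEquiv.symm p with i | i <;> rcases heq : finSumFinEquiv.symm q with j | j <;>
    rw [hep] at hp <;> rw [heq] at hq <;>
    simp only [finSumFinEquiv_apply_left, finSumFinEquiv_apply_right] at hp hq
  · have hi : (i : ℕ) = (p : ℕ) := by rw [← hp]; simp
    have hj : (j : ℕ) = (q : ℕ) := by rw [← hq]; simp
    exact h1 i j (by omega)
  · -- q in right block, p in left block: impossible since q < p
    have hi : (i : ℕ) = (p : ℕ) := by rw [← hp]; simp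
    have hj : (k1 + (j : ℕ)) = (q : ℕ) := by rw [← hq]; simp
    exact absurd hpq (by omega)
  · simp
  · have hi : (k1 + (i : ℕ)) = (p : ℕ) := by rw [← hp]; simp
    have hj : (k1 + (j : ℕ)) = (q : ℕ) := by rw [← hq]; simp
    exact h2 i j (by omega)

theorem MRep.add {t : ℕ} {f g : (Fin t → ℕ) → ℤ} (hf : MRep t f) (hg : MRep t g) :
    MRep t (fun a => f a + g a) := by
  obtain ⟨k1, hk1, u1, v1, M1, N1, hM1, hN1, h1⟩ := hf
  obtain ⟨k2, hk2, u2, v2, M2, N2, hM2, hN2, h2⟩ := hg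
  set e := (finSumFinEquiv : Fin k1 ⊕ Fin k2 ≃ Fin (k1 + k2))
  refine ⟨k1 + k2, by omega,
    fun x => Sum.elim u1 u2 (e.symm x), fun x => Sum.elim v1 v2 (e.symm x),
    (Matrix.reindexAlgEquiv ℤ ℤ e) (Matrix.fromBlocks M1 0 0 M2),
    (Matrix.reindexAlgEquiv ℤ ℤ e) (Matrix.fromBlocks N1 0 0 N2),
    upperTri_blocks hM1 hM2, upperTri_blocks hN1 hN2, fun a => ?_⟩
  rw [show ((Matrix.reindexAlgEquiv ℤ ℤ e) (Matrix.fromBlocks M1 0 0 M2)) =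
    (Matrix.reindexAlgEquiv ℤ ℤ e).toRingEquiv.toRingHom (Matrix.fromBlocks M1 0 0 M2) from rfl,
    show ((Matrix.reindexAlgEquiv ℤ ℤ e) (Matrix.fromBlocks N1 0 0 N2)) =
    (Matrix.reindexAlgEquiv ℤ ℤ e).toRingEquiv.toRingHom (Matrix.fromBlocks N1 0 0 N2) from rfl,
    ← ip_map, ip_fromBlocks]
  have : ((Matrix.reindexAlgEquiv ℤ ℤ e).toRingEquiv.toRingHom
      (Matrix.fromBlocks (ip M1 N1 (List.ofFn a)) 0 0 (ip M2 N2 (List.ofFn a)))) =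
      Matrix.reindex e e (Matrix.fromBlocks (ip M1 N1 (List.ofFn a)) 0 0 (ip M2 N2 (List.ofFn a))) := rfl
  rw [this, dot_reindex e (Sum.elim u1 u2) (Sum.elim v1 v2)]
  show _ = f a + g a
  rw [← h1 a, ← h2 a]
  simp only [dotProduct, Matrix.mulVec, Fintype.sum_sum_type, Sum.elim_inl, Sum.elim_inr,
    Matrix.fromBlocks_apply₁₁, Matrix.fromBlocks_apply₁₂, Matrix.fromBlocks_apply₂₁,
    Matrix.fromBlocks_apply₂₂, Matrix.zero_apply, zero_mul, mul_zero, Finset.sum_const_zero,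
    add_zero, zero_add]

theorem upperTri_kron {k1 k2 : ℕ} {M1 : Matrix (Fin k1) (Fin k1) ℤ}
    {M2 : Matrix (Fin k2) (Fin k2) ℤ} (h1 : UpperTri M1) (h2 : UpperTri M2) :
    UpperTri ((Matrix.reindexAlgEquiv ℤ ℤ finProdFinEquiv)
      (M1 ⊗ₖ M2) : Matrix (Fin (k1 * k2)) (Fin (k1 * k2)) ℤ) := by
  intro p q hpq
  simp only [Matrix.reindexAlgEquiv_apply, Matrix.reindex_apply, Matrix.submatrix_apply,
    finProdFinEquiv_symm_apply, Matrix.kroneckerMap_apply]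
  have hp : ((p.divNat : ℕ), (p.modNat : ℕ)) = ((p : ℕ) / k2, (p : ℕ) % k2) := by
    simp [Fin.coe_divNat, Fin.coe_modNat]
  have hq : ((q.divNat : ℕ), (q.modNat : ℕ)) = ((q : ℕ) / k2, (q : ℕ) % k2) := by
    simp [Fin.coe_divNat, Fin.coe_modNat]
  have hp1 := congrArg Prod.fst hp; have hp2 := congrArg Prod.snd hp
  have hq1 := congrArg Prod.fst hq; have hq2 := congrArg Prod.snd hq
  simp only at hp1 hp2 hq1 hq2
  have hk2 : 0 < k2 := by
    rcases Nat.eq_zero_or_pos k2 with h | h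
    · exfalso; have := p.isLt; omega
    · exact h
  have hpd := Nat.div_add_mod (p : ℕ) k2
  have hqd := Nat.div_add_mod (q : ℕ) k2
  have hpm : (p : ℕ) % k2 < k2 := Nat.mod_lt _ hk2
  have hqm : (q : ℕ) % k2 < k2 := Nat.mod_lt _ hk2
  rcases lt_trichotomy ((q : ℕ) / k2) ((p : ℕ) / k2) with h | h | h
  · rw [h1 p.divNat q.divNat (by rw [hp1, hq1]; exact h), zero_mul]
  · have hc : k2 * ((q : ℕ) / k2) = k2 * ((p : ℕ) / k2) := by rw [h]
    have h2' : (q : ℕ) % k2 < (p : ℕ) % k2 := by omega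
    rw [h2 p.modNat q.modNat (by rw [hp2, hq2]; exact h2'), mul_zero]
  · exfalso
    have h5 : k2 * ((p : ℕ) / k2 + 1) ≤ k2 * ((q : ℕ) / k2) := Nat.mul_le_mul_left k2 h
    rw [Nat.mul_succ] at h5
    omega

theorem dot_kron {k1 k2 : ℕ} (u1 v1 : Fin k1 → ℤ) (u2 v2 : Fin k2 → ℤ)
    (X1 : Matrix (Fin k1) (Fin k1) ℤ) (X2 : Matrix (Fin k2) (Fin k2) ℤ) :
    (fun x : Fin k1 × Fin k2 => u1 x.1 * u2 x.2) ⬝ᵥ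
      (X1 ⊗ₖ X2).mulVec (fun x : Fin k1 × Fin k2 => v1 x.1 * v2 x.2) =
      (u1 ⬝ᵥ X1.mulVec v1) * (u2 ⬝ᵥ X2.mulVec v2) := by
  simp only [dotProduct, Matrix.mulVec, Matrix.kroneckerMap_apply, Fintype.sum_prod_type]
  rw [Finset.sum_mul_sum]
  refine Finset.sum_congr rfl fun p1 _ => ?_
  refine Finset.sum_congr rfl fun p2 _ => ?_
  have : (∑ q1, X1 p1 q1 * v1 q1) * ∑ q2, X2 p2 q2 * v2 q2 =
      ∑ q1, ∑ q2, (X1 p1 q1 * v1 q1) * (X2 p2 q2 * v2 q2) := Finset.sum_mul_sum _ _ _ _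
  calc u1 p1 * u2 p2 * (∑ q1, ∑ q2, X1 p1 q1 * X2 p2 q2 * (v1 q1 * v2 q2))
      = u1 p1 * u2 p2 * (∑ q1, ∑ q2, (X1 p1 q1 * v1 q1) * (X2 p2 q2 * v2 q2)) := by
        congr 1; refine Finset.sum_congr rfl fun q1 _ => Finset.sum_congr rfl fun q2 _ => by ring
    _ = _ := by rw [← this]; ring

theorem MRep.mul {t : ℕ} {f g : (Fin t → ℕ) → ℤ} (hf : MRep t f) (hg : MRep t g) :
    MRep t (fun a => f a * g a) := by
  obtain ⟨k1, hk1, u1, v1, M1, N1, hM1, hN1, h1⟩ := hf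
  obtain ⟨k2, hk2, u2, v2, M2, N2, hM2, hN2, h2⟩ := hg
  set e := (finProdFinEquiv : Fin k1 × Fin k2 ≃ Fin (k1 * k2))
  refine ⟨k1 * k2, Nat.mul_pos hk1 hk2,
    fun x => u1 (e.symm x).1 * u2 (e.symm x).2, fun x => v1 (e.symm x).1 * v2 (e.symm x).2,
    (Matrix.reindexAlgEquiv ℤ ℤ e) (M1 ⊗ₖ M2),
    (Matrix.reindexAlgEquiv ℤ ℤ e) (N1 ⊗ₖ N2),
    upperTri_kron hM1 hM2, upperTri_kron hN1 hN2, fun a => ?_⟩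
  rw [show ((Matrix.reindexAlgEquiv ℤ ℤ e) (M1 ⊗ₖ M2)) =
    (Matrix.reindexAlgEquiv ℤ ℤ e).toRingEquiv.toRingHom (M1 ⊗ₖ M2) from rfl,
    show ((Matrix.reindexAlgEquiv ℤ ℤ e) (N1 ⊗ₖ N2)) =
    (Matrix.reindexAlgEquiv ℤ ℤ e).toRingEquiv.toRingHom (N1 ⊗ₖ N2) from rfl,
    ← ip_map, ip_kron]
  have : ((Matrix.reindexAlgEquiv ℤ ℤ e).toRingEquiv.toRingHom
      ((ip M1 N1 (List.ofFn a)) ⊗ₖ (ip M2 N2 (List.ofFn a)))) =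
      Matrix.reindex e e ((ip M1 N1 (List.ofFn a)) ⊗ₖ (ip M2 N2 (List.ofFn a))) := rfl
  rw [this, dot_reindex e (fun x : Fin k1 × Fin k2 => u1 x.1 * u2 x.2)
    (fun x : Fin k1 × Fin k2 => v1 x.1 * v2 x.2), dot_kron, h1 a, h2 a]

section Var

variable {t : ℕ}

/-- state/accumulator row vector: indicator of state `j` with accumulator `s`. -/
def wv (t : ℕ) (j : ℕ) (s : ℤ) : Fin (t + 1) → ℤ :=
  fun q => if (q : ℕ) = j then 1 else if (q : ℕ) = t then s else 0

/-- matrix that adds the state-`i` indicator into the accumulator -/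
def Mv (t : ℕ) (i : ℕ) : Matrix (Fin (t + 1)) (Fin (t + 1)) ℤ :=
  Matrix.of fun p q => (if p = q then 1 else 0) + (if (p : ℕ) = i ∧ (q : ℕ) = t then 1 else 0)

/-- matrix advancing the state counter, preserving the accumulator -/
def Nv (t : ℕ) : Matrix (Fin (t + 1)) (Fin (t + 1)) ℤ :=
  Matrix.of fun p q =>
    if ((q : ℕ) = (p : ℕ) + 1 ∧ (p : ℕ) + 1 < t) ∨ ((p : ℕ) = t ∧ (q : ℕ) = t) then 1 else 0

theorem upperTri_Mv (i : ℕ) (hi : i < t) : UpperTri (Mv t i) := by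
  intro p q h
  simp only [Mv, Matrix.of_apply]
  rw [if_neg (by intro e; rw [e] at h; omega), if_neg (by rintro ⟨e1, e2⟩; omega)]
  simp

theorem upperTri_Nv : UpperTri (Nv t) := by
  intro p q h
  simp only [Nv, Matrix.of_apply]
  rw [if_neg (by rintro (⟨e1, e2⟩ | ⟨e1, e2⟩) <;> omega)]

theorem single_vecMul {k : ℕ} (a : Fin k) (X : Matrix (Fin k) (Fin k) ℤ) :
    (Pi.single a (1 : ℤ)) ᵥ* X = X a := by
  funext q
  simp [Matrix.vecMul, dotProduct, Pi.single_apply, ite_mul]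

theorem wv_eq (j : ℕ) (hj : j < t) (s : ℤ) :
    wv t j s = Pi.single (⟨j, by omega⟩ : Fin (t + 1)) 1 +
      s • Pi.single (⟨t, by omega⟩ : Fin (t + 1)) 1 := by
  funext q
  simp only [wv, Pi.add_apply, Pi.smul_apply, Pi.single_apply, Fin.ext_iff, smul_eq_mul]
  split_ifs <;> omega

theorem step_M {i : ℕ} (hi : i < t) (j : ℕ) (hj : j < t) (s : ℤ) :
    wv t j s ᵥ* Mv t i = wv t j (s + if j = i then 1 else 0) := by
  rw [wv_eq j hj s, Matrix.add_vecMul, Matrix.smul_vecMul, single_vecMul, single_vecMul]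
  funext q
  simp only [Mv, Matrix.of_apply, wv, Pi.add_apply, Pi.smul_apply, smul_eq_mul, Fin.ext_iff, true_and, false_and, and_true, and_false]
  split_ifs <;> omega

theorem step_M_pow {i : ℕ} (hi : i < t) (j : ℕ) (hj : j < t) (s : ℤ) (x : ℕ) :
    wv t j s ᵥ* (Mv t i) ^ x = wv t j (s + x * (if j = i then 1 else 0)) := by
  induction x with
  | zero => simp [Matrix.vecMul_one]
  | succ x ih =>
      rw [pow_succ, ← Matrix.vecMul_vecMul, ih, step_M hi j hj]
      have : s + (x : ℤ) * (if j = i then 1 else 0) + (if j = i then 1 else 0) =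
          s + ((x : ℕ) + 1 : ℕ) * (if j = i then 1 else 0) := by push_cast; ring
      rw [this]

theorem step_N (j : ℕ) (hj : j + 1 < t) (s : ℤ) :
    wv t j s ᵥ* Nv t = wv t (j + 1) s := by
  rw [wv_eq j (by omega) s, Matrix.add_vecMul, Matrix.smul_vecMul, single_vecMul, single_vecMul]
  funext q
  simp only [Nv, Matrix.of_apply, wv, Pi.add_apply, Pi.smul_apply, smul_eq_mul, Fin.ext_iff, true_and, false_and, and_true, and_false]
  split_ifs <;> omega

theorem var_main (i : ℕ) (hi : i < t) :
    ∀ (l : List ℕ) (j : ℕ) (s : ℤ), l ≠ [] → j + l.length = t →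
      wv t j s ᵥ* ip (Mv t i) (Nv t) l =
        wv t (t - 1) (s + if j ≤ i then ((l.getD (i - j) 0 : ℕ) : ℤ) else 0)
  | [], _, _, h, _ => absurd rfl h
  | [x], j, s, _, hlen => by
      simp only [List.length_singleton] at hlen
      rw [ip_single, step_M_pow hi j (by omega) s]
      have hj : t - 1 = j := by omega
      rw [hj]
      congr 1
      by_cases h : j = i
      · rw [if_pos h, if_pos (show j ≤ i by omega), (show i - j = 0 by omega),
          List.getD_cons_zero]
        simp
      · rw [if_neg h, if_neg (show ¬ j ≤ i by omega)]
        simp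
  | x :: y :: l, j, s, _, hlen => by
      simp only [List.length_cons] at hlen
      rw [ip_cons_cons, ← Matrix.vecMul_vecMul, ← Matrix.vecMul_vecMul,
        step_M_pow hi j (by omega) s, step_N j (by omega),
        var_main i hi (y :: l) (j + 1) _ (by simp) (by simp; omega)]
      congr 1
      rcases lt_trichotomy j i with h | h | h
      · rw [if_neg (show ¬ j = i by omega), if_pos (show j + 1 ≤ i by omega),
          if_pos (show j ≤ i by omega), (show i - j = (i - (j + 1)) + 1 by omega),
          List.getD_cons_succ]
        push_cast; ring
      · rw [if_pos (show j = i from h), if_neg (show ¬ j + 1 ≤ i by omega),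
          if_pos (show j ≤ i by omega), (show i - j = 0 by omega), List.getD_cons_zero]
        push_cast; ring
      · rw [if_neg (show ¬ j = i by omega), if_neg (show ¬ j + 1 ≤ i by omega),
          if_neg (show ¬ j ≤ i by omega)]
        ring

theorem MRep.var (t : ℕ) (ht : 1 ≤ t) (i : Fin t) : MRep t (fun a => ((a i : ℕ) : ℤ)) := by
  refine ⟨t + 1, by omega, wv t 0 0, Pi.single (⟨t, by omega⟩ : Fin (t + 1)) 1,
    Mv t (i : ℕ), Nv t, upperTri_Mv (i : ℕ) i.isLt, upperTri_Nv, fun a => ?_⟩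
  rw [Matrix.dotProduct_mulVec,
    var_main (i : ℕ) i.isLt (List.ofFn a) 0 0 (by simp; omega) (by simp)]
  have h1 : (List.ofFn a).getD ((i : ℕ) - 0) 0 = a i := by
    simp [List.getD_eq_getElem?_getD]
  rw [if_pos (by omega), h1, zero_add]
  simp only [dotProduct, Pi.single_apply]
  rw [Finset.sum_eq_single (⟨t, by omega⟩ : Fin (t + 1))]
  · simp [wv]; omega
  · intro b _ hb
    simp [Fin.ext_iff] at hb ⊢
    intro h; exact absurd h hb
  · intro h; exact absurd (Finset.mem_univ _) h

end Var

theorem mrep_eval (t : ℕ) (ht : 1 ≤ t) (p : MvPolynomial (Fin t) ℤ) :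
    MRep t (fun a => MvPolynomial.eval (fun j => ((a j : ℕ) : ℤ)) p) := by
  induction p using MvPolynomial.induction_on with
  | C c => simpa using MRep.const t c
  | add p q hp hq => simpa using MRep.add hp hq
  | mul_X p i hp => simpa using MRep.mul hp (MRep.var t ht i)

/-- for `t ≥ 1` and any polynomial `p` in `t` variables with integer
coefficients, there is a positive integer `k` and upper-triangular
`A, M, N, B ∈ ℤ^{k×k}` such that
`A M^{a₁} N M^{a₂} N ⋯ N M^{a_t} B = p(a₁,…,a_t) • E_k` for all `a₁, …, a_t ∈ ℕ`. -/
theorem polynomial_representable (t : ℕ) (ht : 1 ≤ t) (p : MvPolynomial (Fin t) ℤ) :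
    ∃ k : ℕ, 0 < k ∧ ∃ A M N B : Matrix (Fin k) (Fin k) ℤ,
      UpperTri A ∧ UpperTri M ∧ UpperTri N ∧ UpperTri B ∧
      ∀ a : Fin t → ℕ,
        ((A :: List.intersperse N (List.ofFn fun j : Fin t => M ^ a j)) ++ [B]).prod =
          (MvPolynomial.eval (fun j => (a j : ℤ)) p) • Emat k := by
  obtain ⟨k, hk, u, v, M, N, hM, hN, h⟩ := mrep_eval t ht p
  refine ⟨k, hk, Matrix.of fun i j => if (i : ℕ) = 0 then u j else 0, M, N,
    Matrix.of fun i j => if (j : ℕ) = k - 1 then v i else 0, ?_, hM, hN, ?_, fun a => ?_⟩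
  · intro p q hpq
    simp only [Matrix.of_apply]
    rw [if_neg (by omega)]
  · intro p q hpq
    simp only [Matrix.of_apply]
    rw [if_neg (by omega)]
  · have hX : (List.intersperse N (List.ofFn fun j : Fin t => M ^ a j)).prod =
        ip M N (List.ofFn a) := by
      rw [ip_def, List.map_ofFn]
      rfl
    rw [List.cons_append, List.prod_cons, List.prod_append, hX, List.prod_singleton,
      ← mul_assoc]
    have key := h a
    rw [Matrix.dotProduct_mulVec] at key
    beta_reduce at key
    ext i j
    rw [Matrix.smul_apply]
    simp only [Matrix.mul_apply, Matrix.of_apply, Emat, smul_eq_mul]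
    by_cases hi : (i : ℕ) = 0
    · by_cases hj : (j : ℕ) = k - 1
      · rw [if_pos ⟨hi, hj⟩, mul_one, ← key]
        simp only [dotProduct, Matrix.vecMul, if_pos hi, if_pos hj]
      · rw [if_neg (by tauto), mul_zero]
        apply Finset.sum_eq_zero
        intro q _
        rw [if_neg (show ¬ (j : ℕ) = k - 1 from hj), mul_zero]
    · rw [if_neg (by tauto), mul_zero]
      apply Finset.sum_eq_zero
      intro q _
      rw [Finset.sum_eq_zero (fun p _ => by
        rw [if_neg (show ¬ (i : ℕ) = 0 from hi), zero_mul]), zero_mul]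
end

section
/- Let m ≥ 2, let P(x₁, …, x_m) be a polynomial in m variables with integer coefficients, and let C_{m+1} : ℕ^{m+1} → ℕ be the (m+1)-variable Cantor pairing polynomial. For a positive integer a, the following are equivalent: (1) there exist natural numbers x₂, …, x_m with P(a, x₂, …, x_m) = 0; (2) there exist natural numbers b₂, …, b_{m+1} and c₂, …, c_{m+1} with (b₂, …, b_{m+1}) ≠ (c₂, …, c_{m+1}) and C_{m+1}(a, b₂, …, b_m, P(a, b₂, …, b_m)²·b_{m+1}) = C_{m+1}(a, c₂, …, c_m, P(a, c₂, …, c_m)²·c_{m+1}). -/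
def cantor2 (x y : ℕ) : ℕ := (x + y) * (x + y + 1) / 2 + y

def cantor : (k : ℕ) → (Fin (k + 1) → ℕ) → ℕ
  | 0, x => x 0
  | k + 1, x => cantor2 (cantor k fun i => x i.castSucc) (x (Fin.last (k + 1)))

def gauss (s : ℕ) : ℕ := s * (s + 1) / 2

lemma gauss_succ (s : ℕ) : gauss (s + 1) = gauss s + (s + 1) := by
  unfold gauss
  have : (s + 1) * (s + 1 + 1) = s * (s + 1) + 2 * (s + 1) := by ring
  omega

lemma gauss_mono : Monotone gauss := by
  intro s t h
  induction t with
  | zero => have : s = 0 := Nat.le_zero.mp h; subst this; exact le_rfl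
  | succ t ih =>
    rcases Nat.lt_or_ge s (t+1) with h' | h'
    · have := ih (by omega)
      rw [gauss_succ]; omega
    · have hs : s = t + 1 := by omega
      subst hs; exact le_rfl

lemma cantor2_inj {x y x' y' : ℕ} (h : cantor2 x y = cantor2 x' y') :
    x = x' ∧ y = y' := by
  unfold cantor2 at h
  have key : ∀ u v u' v' : ℕ, u + v < u' + v' →
      gauss (u+v) + v < gauss (u'+v') + v' := by
    intro u v u' v' hlt
    have h1 : gauss (u+v) + v < gauss (u+v+1) := by rw [gauss_succ]; omega
    have h2 : gauss (u+v+1) ≤ gauss (u'+v') := gauss_mono hlt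
    omega
  have hg : gauss (x+y) + y = gauss (x'+y') + y' := h
  rcases Nat.lt_trichotomy (x+y) (x'+y') with hlt | heq | hgt
  · exact absurd hg (by have := key x y x' y' hlt; omega)
  · rw [heq] at hg; constructor <;> omega
  · exact absurd hg.symm (by have := key x' y' x y hgt; omega)

lemma cantor_inj : ∀ k, Function.Injective (cantor k) := by
  intro k
  induction k with
  | zero =>
    intro x y h
    funext i
    have : i = 0 := Fin.ext (by omega)
    subst this; exact h
  | succ k ih =>
    intro x y h
    unfold cantor at h
    obtain ⟨h1, h2⟩ := cantor2_inj h
    have h3 := ih h1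
    funext i
    induction i using Fin.lastCases with
    | last => exact h2
    | cast j => exact congrFun h3 j

/-- Lemma on `P` and `Q`: let `m = m' + 2 ≥ 2`, let `P` be a polynomial in
`m` variables over ℤ and let `a` be a positive integer. Then `P(a, x₂, …, x_m) = 0` has a
solution in ℕ iff there are tuples `(b₂,…,b_{m+1}) ≠ (c₂,…,c_{m+1})` of naturals with
`C_{m+1}(a, b₂, …, b_m, P(a,b₂,…,b_m)²·b_{m+1}) = C_{m+1}(a, c₂, …, c_m, P(a,c₂,…,c_m)²·c_{m+1})`. -/
theorem hilbert_reduction (m' : ℕ) (P : MvPolynomial (Fin (m' + 2)) ℤ) (a : ℕ)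
    (ha : 0 < a) :
    (∃ x : Fin (m' + 1) → ℕ,
        MvPolynomial.eval (Fin.cons (a : ℤ) fun i => (x i : ℤ)) P = 0) ↔
      ∃ b c : Fin (m' + 2) → ℕ, b ≠ c ∧
        cantor (m' + 2)
          (Fin.cons a (Fin.snoc (fun i : Fin (m' + 1) => b i.castSucc)
            ((MvPolynomial.eval
                (Fin.cons (a : ℤ) fun i : Fin (m' + 1) => (b i.castSucc : ℤ)) P).natAbs ^ 2 *
              b (Fin.last (m' + 1))))) =
        cantor (m' + 2)
          (Fin.cons a (Fin.snoc (fun i : Fin (m' + 1) => c i.castSucc)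
            ((MvPolynomial.eval
                (Fin.cons (a : ℤ) fun i : Fin (m' + 1) => (c i.castSucc : ℤ)) P).natAbs ^ 2 *
              c (Fin.last (m' + 1))))) := by
  constructor
  · rintro ⟨x, hx⟩
    refine ⟨Fin.snoc x 0, Fin.snoc x 1, ?_, ?_⟩
    · intro h
      have := congrFun h (Fin.last (m' + 1))
      simp [Fin.snoc_last] at this
    · congr 1
      simp only [Fin.snoc_castSucc, Fin.snoc_last]
      have : (MvPolynomial.eval (Fin.cons (a : ℤ) fun i : Fin (m' + 1) => (x i : ℤ)) P).natAbs
          = 0 := by rw [hx]; rfl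
      rw [this]
      norm_num
  · rintro ⟨b, c, hbc, heq⟩
    have heq' := cantor_inj _ heq
    have hg : (Fin.snoc (fun i : Fin (m' + 1) => b i.castSucc)
          ((MvPolynomial.eval
              (Fin.cons (a : ℤ) fun i : Fin (m' + 1) => (b i.castSucc : ℤ)) P).natAbs ^ 2 *
            b (Fin.last (m' + 1))) : Fin (m'+2) → ℕ) =
        Fin.snoc (fun i : Fin (m' + 1) => c i.castSucc)
          ((MvPolynomial.eval
              (Fin.cons (a : ℤ) fun i : Fin (m' + 1) => (c i.castSucc : ℤ)) P).natAbs ^ 2 *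
            c (Fin.last (m' + 1))) := by
      funext j
      have := congrFun heq' j.succ
      simpa [Fin.cons_succ] using this
    have hcast : ∀ i : Fin (m' + 1), b i.castSucc = c i.castSucc := by
      intro i
      have := congrFun hg i.castSucc
      simpa [Fin.snoc_castSucc] using this
    have hcast' : (fun i : Fin (m' + 1) => (b i.castSucc : ℤ)) =
        fun i : Fin (m' + 1) => (c i.castSucc : ℤ) := by
      funext i; exact congrArg (fun n : ℕ => (n : ℤ)) (hcast i)
    have hlast := congrFun hg (Fin.last (m' + 1))
    simp only [Fin.snoc_last] at hlast
    rw [hcast'] at hlast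
    have hblast : b (Fin.last (m' + 1)) ≠ c (Fin.last (m' + 1)) := by
      intro h
      apply hbc
      funext j
      induction j using Fin.lastCases with
      | last => exact h
      | cast i => exact hcast i
    have hN : (MvPolynomial.eval
        (Fin.cons (a : ℤ) fun i : Fin (m' + 1) => (c i.castSucc : ℤ)) P).natAbs = 0 := by
      by_contra hne
      have : b (Fin.last (m' + 1)) = c (Fin.last (m' + 1)) :=
        Nat.eq_of_mul_eq_mul_left (by positivity) hlast
      exact hblast this
    refine ⟨fun i => c i.castSucc, Int.natAbs_eq_zero.mp hN⟩
end

section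
/- Let t ≥ 1, let N = [[3, 1], [0, 1]], N' = [[0, 1], [0, 1]], and M = [[3, 0], [0, 1]] as 2×2 rational matrices. Then for all natural numbers m₁, …, m_t: N·M^{m₁}·N·M^{m₂}·N ⋯ N·M^{m_t}·N' = [[0, E], [0, 1]] where E = 3^{m₁+⋯+m_t+t} + 3^{m₁+⋯+m_{t-1}+t-1} + ⋯ + 3^{m₁+m₂+2} + 3^{m₁+1} + 1 (that is, E = 1 + ∑_{j=1}^{t} 3^{j + m₁ + ⋯ + m_j}). Consequently, the map ℕ^t → Matrix (Fin 2) (Fin 2) ℚ sending (m₁, …, m_t) to this product is injective, even though N' is singular. -/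
/-!
Each factor `N * M ^ a = !![3 ^ (a + 1), 1; 0, 1]` acts on columns `(x, 1)` as the affine map
`x ↦ 3 ^ (a + 1) * x + 1`, and `N'` has zero first column and second column `(1, 1)`. Hence the
product is `!![0, E; 0, 1]` with `E = 3 ^ (m₁ + 1) * (3 ^ (m₂ + 1) * (⋯ * 1 + 1) ⋯) + 1`, whose
expansion is the stated sum. Every such `E` is `≡ 1 [MOD 3]`, so the `3`-adic valuation of
`E - 1` recovers `m₁ + 1`, and `(E - 1) / 3 ^ (m₁ + 1)` is the value for `(m₂, …, m_t)`:
the `mᵢ` are read off `E` one after another.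
-/

open Finset

theorem Fin.sum_Iic_succ {M : Type*} [AddCommMonoid M] {n : ℕ} (f : Fin (n + 1) → M)
    (j : Fin n) : ∑ i ∈ Iic j.succ, f i = f 0 + ∑ i ∈ Iic j, f i.succ := by
  rw [← Icc_bot, bot_eq_zero, Icc_eq_cons_Ioc (Fin.zero_le _), Finset.sum_cons,
    ← Fin.map_succEmb_Iic, sum_map]
  rfl

theorem eq_of_prime_pow_mul_eq {p a b x y : ℕ} (hp : p.Prime) (hx : ¬p ∣ x) (hy : ¬p ∣ y)
    (h : p ^ a * x = p ^ b * y) : a = b ∧ x = y := by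
  have : Fact p.Prime := ⟨hp⟩
  have hval : ∀ c {z : ℕ}, ¬p ∣ z → padicValNat p (p ^ c * z) = c := fun c z hz => by
    rw [padicValNat.mul (pow_ne_zero _ hp.ne_zero) (by rintro rfl; exact hz (dvd_zero p)),
      padicValNat.prime_pow, padicValNat.eq_zero_of_not_dvd hz, add_zero]
  have hab : a = b := by rw [← hval a hx, h, hval b hy]
  subst hab
  exact ⟨rfl, Nat.eq_of_mul_eq_mul_left (pow_pos hp.pos a) h⟩

theorem Matrix.fin_two_diag_one_pow {R : Type*} [CommSemiring R] (x : R) (n : ℕ) :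
    (!![x, 0; 0, 1] : Matrix (Fin 2) (Fin 2) R) ^ n = !![x ^ n, 0; 0, 1] := by
  have hdiag : ∀ y : R, (!![y, 0; 0, 1] : Matrix (Fin 2) (Fin 2) R) = diagonal ![y, 1] := by
    intro y; ext i j; fin_cases i <;> fin_cases j <;> rfl
  rw [hdiag, hdiag, diagonal_pow]
  congr 1; ext i; fin_cases i <;> simp

def ternaryCode : List ℕ → ℕ
  | [] => 1
  | a :: L => 3 ^ (a + 1) * ternaryCode L + 1

theorem ternaryCode_mod_three (L : List ℕ) : ternaryCode L % 3 = 1 := by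
  cases L with
  | nil => rfl
  | cons a L => rw [ternaryCode, pow_succ', mul_assoc, Nat.mul_add_mod]

theorem three_not_dvd_ternaryCode (L : List ℕ) : ¬3 ∣ ternaryCode L := by
  have := ternaryCode_mod_three L
  omega

theorem ternaryCode_ne_zero (L : List ℕ) : ternaryCode L ≠ 0 :=
  fun h => three_not_dvd_ternaryCode L (h ▸ dvd_zero 3)

theorem ternaryCode_cons_ne_one (a : ℕ) (L : List ℕ) : ternaryCode (a :: L) ≠ 1 := by
  simp [ternaryCode, ternaryCode_ne_zero]

theorem ternaryCode_injective : Function.Injective ternaryCode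
  | [], [], _ => rfl
  | [], b :: L, h => absurd h.symm (ternaryCode_cons_ne_one b L)
  | a :: L, [], h => absurd h (ternaryCode_cons_ne_one a L)
  | a :: L, b :: L', h => by
    obtain ⟨hab, hLL'⟩ := eq_of_prime_pow_mul_eq Nat.prime_three
      (three_not_dvd_ternaryCode L) (three_not_dvd_ternaryCode L') (Nat.add_right_cancel h)
    rw [Nat.add_right_cancel hab, ternaryCode_injective hLL']

theorem ternaryCode_ofFn {t : ℕ} (m : Fin t → ℕ) :
    ternaryCode (List.ofFn m) = 1 + ∑ j : Fin t, 3 ^ ((j : ℕ) + 1 + ∑ i ∈ Iic j, m i) := by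
  induction t with
  | zero => rfl
  | succ n ih =>
    have hIic_zero : ∑ i ∈ Iic (0 : Fin (n + 1)), m i = m 0 := by
      rw [← bot_eq_zero, Iic_bot, sum_singleton]
    rw [List.ofFn_succ, ternaryCode, ih, Fin.sum_univ_succ, mul_add, mul_one, mul_sum]
    simp only [Fin.sum_Iic_succ, Fin.val_succ, Fin.val_zero, hIic_zero, ← pow_add]
    ring_nf

theorem prod_map_mul_pow_mul_eq_ternaryCode {R : Type*} [CommSemiring R] (L : List ℕ) :
    (L.map fun a => (!![3, 1; 0, 1] : Matrix (Fin 2) (Fin 2) R) * !![3, 0; 0, 1] ^ a).prod *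
      !![0, 1; 0, 1] = !![0, (ternaryCode L : R); 0, 1] := by
  induction L with
  | nil => simp [ternaryCode]
  | cons a L ih =>
    rw [List.map_cons, List.prod_cons, mul_assoc, ih, Matrix.fin_two_diag_one_pow, ternaryCode]
    simp [pow_succ']

theorem singular_example_general (t : ℕ) (N N' M : Matrix (Fin 2) (Fin 2) ℚ)
    (hN : N = !![3, 1; 0, 1]) (hN' : N' = !![0, 1; 0, 1]) (hM : M = !![3, 0; 0, 1]) :
    (∀ m : Fin t → ℕ,
        (List.ofFn (fun i : Fin t => N * M ^ m i)).prod * N' =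
          !![0, 1 + ∑ j : Fin t, (3 : ℚ) ^ ((j : ℕ) + 1 + ∑ i ∈ Finset.Iic j, m i); 0, 1]) ∧
      Function.Injective
        (fun m : Fin t → ℕ => (List.ofFn (fun i : Fin t => N * M ^ m i)).prod * N') := by
  subst hN hN' hM
  have hprod (m : Fin t → ℕ) : (List.ofFn fun i => !![3, 1; 0, 1] * !![3, 0; 0, 1] ^ m i).prod *
      !![0, 1; 0, 1] = !![0, (ternaryCode (List.ofFn m) : ℚ); 0, 1] := by
    simpa only [List.map_ofFn, Function.comp_def] using
      prod_map_mul_pow_mul_eq_ternaryCode (R := ℚ) (List.ofFn m)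
  refine ⟨fun m => by rw [hprod, ternaryCode_ofFn]; push_cast; rfl, fun m m' h => ?_⟩
  have hcode : (ternaryCode (List.ofFn m) : ℚ) = ternaryCode (List.ofFn m') := by
    have h01 := congrFun (congrFun h 0) 1
    simp only [hprod] at h01
    simpa using h01
  exact List.ofFn_injective (ternaryCode_injective (mod_cast hcode))

/-- with `N = !![3,1;0,1]`, `N' = !![0,1;0,1]`, `M = !![3,0;0,1]` over ℚ and
`t ≥ 1`, `N M^{m₁} N M^{m₂} ⋯ N M^{m_t} N' = !![0, E; 0, 1]` where
`E = 1 + ∑_{j=1}^t 3^{j + m₁ + ⋯ + m_j}`; consequently the map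
`(m₁,…,m_t) ↦ N M^{m₁} N ⋯ N M^{m_t} N'` is injective even though `N'` is singular. -/
theorem singular_example (t : ℕ) (ht : 1 ≤ t) (N N' M : Matrix (Fin 2) (Fin 2) ℚ)
    (hN : N = !![3, 1; 0, 1]) (hN' : N' = !![0, 1; 0, 1]) (hM : M = !![3, 0; 0, 1]) :
    (∀ m : Fin t → ℕ,
        (List.ofFn (fun i : Fin t => N * M ^ m i)).prod * N' =
          !![0, 1 + ∑ j : Fin t, (3 : ℚ) ^ ((j : ℕ) + 1 + ∑ i ∈ Finset.Iic j, m i); 0, 1]) ∧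
      Function.Injective
        (fun m : Fin t → ℕ => (List.ofFn (fun i : Fin t => N * M ^ m i)).prod * N') :=
  singular_example_general t N N' M hN hN' hM
end
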